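/- Let T̂ = [−1,1]² and T a rectangle with affine bijection F(x) = Bx + b mapping T onto T̂, where B is an invertible diagonal 2×2 matrix. Let Ĥ ⊂ H¹(T̂) be a closed subspace on which the H¹-seminorm is a norm, V̂ ⊂ Ĥ finite-dimensional, and φ̂ ∈ L²(T̂). Define the pullback spaces H := {v̂ ∘ F : v̂ ∈ Ĥ}, V := {v̂ ∘ F : v̂ ∈ V̂} and the pushed-forward functional G(v) := ∫_T (φ̂ ∘ F) v. Then ‖G‖_{H'}/‖G‖_{V'} ≤ κ₂(B)² · ‖Ĝ‖_{Ĥ'}/‖Ĝ‖_{V̂'}, where Ĝ(v̂) := ∫_{T̂} φ̂ v̂ and κ₂(B) is the spectral condition number of B. -/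

import Mathlib

/-!
The affine map `F x = B x + c`, `B = diag(b₁, b₂)`, has constant Jacobian `|b₁ b₂|`, so
`G (v̂ ∘ F) = |b₁ b₂|⁻¹ Ĝ v̂`, while the chain rule gives `|∇(v̂ ∘ F)|² = |B ∇v̂|² ∘ F`, and
`|B ∇v̂|²` lies between `min |bᵢ|²` and `max |bᵢ|²` times `|∇v̂|²`. Hence every quotient
`|G v| / |v|_T` is comparable to the quotient `|Ĝ v̂| / |v̂|_{T̂}`, with constants
`(√|b₁ b₂| min |bᵢ|)⁻¹` and `√|b₁ b₂| max |bᵢ|`. Passing to suprema, the dual norms over the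
pulled-back spaces and over the reference spaces are comparable with the same constants, and
the ratio of dual norms changes at most by their product `κ₂(B) ≤ κ₂(B)²`.
-/

open MeasureTheory Set

/-- Squared Euclidean norm of the (strong) gradient of `v` at `x`. -/
noncomputable def gradSq (v : ℝ × ℝ → ℝ) (x : ℝ × ℝ) : ℝ :=
  (fderiv ℝ v x (1, 0)) ^ 2 + (fderiv ℝ v x (0, 1)) ^ 2

/-- The `H¹(S)`-seminorm `|v|_S := ‖∇v‖_{L²(S)}`. -/
noncomputable def sn (S : Set (ℝ × ℝ)) (v : ℝ × ℝ → ℝ) : ℝ :=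
  Real.sqrt (∫ x in S, gradSq v x)

section AffineChangeOfVariables

variable {E G : Type*} [NormedAddCommGroup E] [NormedSpace ℝ E] [MeasurableSpace E]
  [BorelSpace E] [FiniteDimensional ℝ E] (μ : Measure E) [μ.IsAddHaarMeasure]
  [NormedAddCommGroup G] [NormedSpace ℝ G]

theorem map_affine_addHaar_eq_smul_addHaar (A : E ≃L[ℝ] E) (c : E) :
    μ.map (fun x => A x + c) = ENNReal.ofReal |(LinearMap.det (A : E →ₗ[ℝ] E))⁻¹| • μ := by
  have hA : LinearMap.det (A : E →ₗ[ℝ] E) ≠ 0 := A.toLinearEquiv.isUnit_det'.ne_zero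
  have hF : (fun x => A x + c) = (· + c) ∘ (A : E →ₗ[ℝ] E) := rfl
  rw [hF, ← Measure.map_map (measurable_add_const c)
      (A : E →ₗ[ℝ] E).continuous_of_finiteDimensional.measurable,
    Measure.map_linearMap_addHaar_eq_smul_addHaar μ hA, Measure.map_smul, map_add_right_eq_self]

theorem setIntegral_comp_affine (A : E ≃L[ℝ] E) (c : E) (g : E → G) (s : Set E) :
    ∫ x in (fun x => A x + c) ⁻¹' s, g (A x + c) ∂μ =
      |(LinearMap.det (A : E →ₗ[ℝ] E))⁻¹| • ∫ y in s, g y ∂μ := by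
  have hF : MeasurableEmbedding (fun x => A x + c) :=
    (A.toHomeomorph.trans (Homeomorph.addRight c)).measurableEmbedding
  rw [← hF.setIntegral_map, map_affine_addHaar_eq_smul_addHaar, Measure.restrict_smul,
    integral_smul_measure, ENNReal.toReal_ofReal (abs_nonneg _)]

end AffineChangeOfVariables

/-- The reverse bound `f ≤ a * g` makes `f` and `g` integrable together, so the inequality also
holds when both integrals take the junk value `0`. -/
theorem integral_le_mul_integral_of_le_mul {α : Type*} [MeasurableSpace α] {μ : Measure α}
    {f g : α → ℝ} {a b : ℝ} (hf : AEStronglyMeasurable f μ) (hf0 : ∀ x, 0 ≤ f x)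
    (hg0 : ∀ x, 0 ≤ g x) (hgf : ∀ x, g x ≤ b * f x) (hfg : ∀ x, f x ≤ a * g x) :
    ∫ x, g x ∂μ ≤ b * ∫ x, f x ∂μ := by
  by_cases hfi : Integrable f μ
  · rw [← integral_const_mul]
    exact integral_mono_of_nonneg (.of_forall hg0) (hfi.const_mul b) (.of_forall hgf)
  · have hgi : ¬Integrable g μ := fun hgi => hfi <| (hgi.const_mul a).mono' hf <|
      .of_forall fun x => (Real.norm_of_nonneg (hf0 x)).trans_le (hfg x)
    rw [integral_undef hfi, integral_undef hgi, mul_zero]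

theorem sqrt_inv_mul_sq_mul {d r : ℝ} (hd : 0 ≤ d) (hr : 0 ≤ r) (I : ℝ) :
    Real.sqrt (d⁻¹ * (r ^ 2 * I)) = r / Real.sqrt d * Real.sqrt I := by
  rw [Real.sqrt_mul (inv_nonneg.2 hd), Real.sqrt_mul (sq_nonneg r), Real.sqrt_inv,
    Real.sqrt_sq hr]
  ring

/-- The reverse comparison `hgf` makes `f` and `g` bounded together, which covers the junk value
`0` of an unbounded real `⨆`. -/
theorem iSup_le_mul_iSup_of_forall_exists_le {ι κ : Sort*} {f : ι → ℝ} {g : κ → ℝ} {c K : ℝ}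
    (hc : 0 ≤ c) (hK : 0 ≤ K) (hg : ∀ j, 0 ≤ g j) (hfg : ∀ i, ∃ j, f i ≤ c * g j)
    (hgf : ∀ j, ∃ i, g j ≤ K * f i) :
    ⨆ i, f i ≤ c * ⨆ j, g j := by
  by_cases hbdd : BddAbove (range g)
  · refine Real.iSup_le (fun i => ?_) (mul_nonneg hc (Real.iSup_nonneg hg))
    obtain ⟨j, hj⟩ := hfg i
    exact hj.trans (mul_le_mul_of_nonneg_left (le_ciSup hbdd j) hc)
  · have hf : ¬BddAbove (range f) := fun ⟨B, hB⟩ => hbdd ⟨K * B, by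
      rintro _ ⟨j, rfl⟩
      obtain ⟨i, hi⟩ := hgf j
      exact hi.trans (mul_le_mul_of_nonneg_left (hB ⟨i, rfl⟩) hK)⟩
    rw [Real.iSup_of_not_bddAbove hf, Real.iSup_of_not_bddAbove hbdd, mul_zero]

theorem div_le_mul_mul_div_of_le_mul {A a A' a' c K : ℝ} (hA' : 0 ≤ A') (ha' : 0 ≤ a')
    (ha : 0 ≤ a) (hA : A ≤ c * A') (haa' : a ≤ c * a') (ha'a : a' ≤ K * a) :
    A / a ≤ c * K * (A' / a') := by
  rcases ha.eq_or_lt with rfl | ha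
  · have : a' = 0 := le_antisymm (by simpa using ha'a) ha'
    simp [this]
  have ha'pos : 0 < a' := by
    by_contra! h
    have : a' = 0 := le_antisymm h ha'
    rw [this, mul_zero] at haa'
    exact absurd haa' (not_le.2 ha)
  have hc : 0 ≤ c := by nlinarith
  rw [div_le_iff₀ ha]
  calc A ≤ c * A' := hA
    _ ≤ c * A' * (K * a / a') := by
        refine le_mul_of_one_le_right (mul_nonneg hc hA') ?_
        rwa [one_le_div ha'pos]
    _ = c * K * (A' / a') * a := by ring

/-- `|B ∇v(y)|²` for `B = diag(b1, b2)`. -/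
noncomputable def weightedGradSq (b1 b2 : ℝ) (v : ℝ × ℝ → ℝ) (y : ℝ × ℝ) : ℝ :=
  b1 ^ 2 * fderiv ℝ v y (1, 0) ^ 2 + b2 ^ 2 * fderiv ℝ v y (0, 1) ^ 2

theorem gradSq_nonneg (v : ℝ × ℝ → ℝ) (y : ℝ × ℝ) : 0 ≤ gradSq v y := by
  unfold gradSq; positivity

theorem weightedGradSq_nonneg (b1 b2 : ℝ) (v : ℝ × ℝ → ℝ) (y : ℝ × ℝ) :
    0 ≤ weightedGradSq b1 b2 v y := by
  unfold weightedGradSq; positivity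

theorem measurable_weightedGradSq (b1 b2 : ℝ) (v : ℝ × ℝ → ℝ) :
    Measurable (weightedGradSq b1 b2 v) :=
  (((measurable_fderiv_apply_const ℝ v _).pow_const 2).const_mul _).add
    (((measurable_fderiv_apply_const ℝ v _).pow_const 2).const_mul _)

theorem measurable_gradSq (v : ℝ × ℝ → ℝ) : Measurable (gradSq v) :=
  ((measurable_fderiv_apply_const ℝ v _).pow_const 2).add
    ((measurable_fderiv_apply_const ℝ v _).pow_const 2)

theorem sq_min_abs_mul_gradSq_le (b1 b2 : ℝ) (v : ℝ × ℝ → ℝ) (y : ℝ × ℝ) :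
    min |b1| |b2| ^ 2 * gradSq v y ≤ weightedGradSq b1 b2 v y := by
  have h1 : min |b1| |b2| ^ 2 ≤ b1 ^ 2 := by
    rw [← sq_abs b1]; gcongr; exact min_le_left _ _
  have h2 : min |b1| |b2| ^ 2 ≤ b2 ^ 2 := by
    rw [← sq_abs b2]; gcongr; exact min_le_right _ _
  unfold gradSq weightedGradSq
  nlinarith [sq_nonneg (fderiv ℝ v y (1, 0)), sq_nonneg (fderiv ℝ v y (0, 1))]

theorem weightedGradSq_le_sq_max_abs_mul (b1 b2 : ℝ) (v : ℝ × ℝ → ℝ) (y : ℝ × ℝ) :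
    weightedGradSq b1 b2 v y ≤ max |b1| |b2| ^ 2 * gradSq v y := by
  have h1 : b1 ^ 2 ≤ max |b1| |b2| ^ 2 := by
    rw [← sq_abs b1]; gcongr; exact le_max_left _ _
  have h2 : b2 ^ 2 ≤ max |b1| |b2| ^ 2 := by
    rw [← sq_abs b2]; gcongr; exact le_max_right _ _
  unfold gradSq weightedGradSq
  nlinarith [sq_nonneg (fderiv ℝ v y (1, 0)), sq_nonneg (fderiv ℝ v y (0, 1))]

theorem sn_nonneg (S : Set (ℝ × ℝ)) (v : ℝ × ℝ → ℝ) : 0 ≤ sn S v := Real.sqrt_nonneg _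

noncomputable def dualQuotient (S : Set (ℝ × ℝ)) (φ v : ℝ × ℝ → ℝ) : ℝ :=
  |∫ x in S, φ x * v x| / sn S v

/-- The norm of `v ↦ ∫_S φ v` dual to the seminorm `sn S` on the family `u`
(a real `⨆`, hence `0` when unbounded). -/
noncomputable def dualNorm {ι : Type*} (S : Set (ℝ × ℝ)) (φ : ℝ × ℝ → ℝ)
    (u : ι → ℝ × ℝ → ℝ) : ℝ :=
  ⨆ i : {i : ι // sn S (u i) ≠ 0}, dualQuotient S φ (u i)

theorem dualQuotient_nonneg (S : Set (ℝ × ℝ)) (φ v : ℝ × ℝ → ℝ) : 0 ≤ dualQuotient S φ v :=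
  div_nonneg (abs_nonneg _) (sn_nonneg S v)

theorem dualNorm_nonneg {ι : Type*} (S : Set (ℝ × ℝ)) (φ : ℝ × ℝ → ℝ) (u : ι → ℝ × ℝ → ℝ) :
    0 ≤ dualNorm S φ u :=
  Real.iSup_nonneg fun _ => dualQuotient_nonneg _ _ _

def diagAffine (b1 b2 c1 c2 : ℝ) (p : ℝ × ℝ) : ℝ × ℝ := (b1 * p.1 + c1, b2 * p.2 + c2)

section DiagonalAffine

variable {b1 b2 : ℝ}

noncomputable def diagEquiv (hb1 : b1 ≠ 0) (hb2 : b2 ≠ 0) : (ℝ × ℝ) ≃L[ℝ] ℝ × ℝ :=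
  (ContinuousLinearEquiv.smulLeft (Units.mk0 b1 hb1)).prodCongr
    (ContinuousLinearEquiv.smulLeft (Units.mk0 b2 hb2))

theorem diagEquiv_apply (hb1 : b1 ≠ 0) (hb2 : b2 ≠ 0) (p : ℝ × ℝ) :
    diagEquiv hb1 hb2 p = (b1 * p.1, b2 * p.2) := rfl

theorem diagAffine_eq (hb1 : b1 ≠ 0) (hb2 : b2 ≠ 0) (c1 c2 : ℝ) :
    diagAffine b1 b2 c1 c2 = fun p => diagEquiv hb1 hb2 p + (c1, c2) := rfl

theorem det_diagEquiv (hb1 : b1 ≠ 0) (hb2 : b2 ≠ 0) :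
    LinearMap.det (diagEquiv hb1 hb2 : ℝ × ℝ →ₗ[ℝ] ℝ × ℝ) = b1 * b2 := by
  have : (diagEquiv hb1 hb2 : ℝ × ℝ →ₗ[ℝ] ℝ × ℝ) =
      (b1 • LinearMap.id).prodMap (b2 • LinearMap.id) := by
    ext <;> simp [diagEquiv_apply]
  rw [this, LinearMap.det_prodMap, LinearMap.det_smul, LinearMap.det_smul]
  simp

theorem setIntegral_comp_diagAffine {G : Type*} [NormedAddCommGroup G] [NormedSpace ℝ G]
    (hb1 : b1 ≠ 0) (hb2 : b2 ≠ 0) (c1 c2 : ℝ) (g : ℝ × ℝ → G) (S : Set (ℝ × ℝ)) :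
    ∫ x in diagAffine b1 b2 c1 c2 ⁻¹' S, g (diagAffine b1 b2 c1 c2 x) =
      |b1 * b2|⁻¹ • ∫ y in S, g y := by
  rw [diagAffine_eq hb1 hb2, setIntegral_comp_affine, det_diagEquiv, abs_inv]

theorem gradSq_comp_diagAffine (hb1 : b1 ≠ 0) (hb2 : b2 ≠ 0) (c1 c2 : ℝ) (v : ℝ × ℝ → ℝ)
    (x : ℝ × ℝ) :
    gradSq (v ∘ diagAffine b1 b2 c1 c2) x = weightedGradSq b1 b2 v (diagAffine b1 b2 c1 c2 x) := by
  have hcomp : v ∘ diagAffine b1 b2 c1 c2 = (fun p => v (p + (c1, c2))) ∘ diagEquiv hb1 hb2 :=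
    rfl
  have h10 : diagEquiv hb1 hb2 (1, 0) = b1 • ((1 : ℝ), (0 : ℝ)) := by simp [diagEquiv_apply]
  have h01 : diagEquiv hb1 hb2 (0, 1) = b2 • ((0 : ℝ), (1 : ℝ)) := by simp [diagEquiv_apply]
  simp only [gradSq, weightedGradSq, hcomp, ContinuousLinearEquiv.comp_right_fderiv,
    fderiv_comp_add_right, ContinuousLinearMap.comp_apply, ContinuousLinearEquiv.coe_coe, h10, h01,
    map_smul, smul_eq_mul]
  rw [show diagEquiv hb1 hb2 x + (c1, c2) = diagAffine b1 b2 c1 c2 x from rfl]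
  ring

theorem sn_comp_diagAffine (hb1 : b1 ≠ 0) (hb2 : b2 ≠ 0) (c1 c2 : ℝ)
    (S : Set (ℝ × ℝ)) (v : ℝ × ℝ → ℝ) :
    sn (diagAffine b1 b2 c1 c2 ⁻¹' S) (v ∘ diagAffine b1 b2 c1 c2) =
      Real.sqrt (|b1 * b2|⁻¹ * ∫ y in S, weightedGradSq b1 b2 v y) := by
  simp only [sn, gradSq_comp_diagAffine hb1 hb2]
  rw [setIntegral_comp_diagAffine hb1 hb2 c1 c2 (weightedGradSq b1 b2 v), smul_eq_mul]

theorem sn_comp_diagAffine_le (hb1 : b1 ≠ 0) (hb2 : b2 ≠ 0) (c1 c2 : ℝ)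
    (S : Set (ℝ × ℝ)) (v : ℝ × ℝ → ℝ) :
    sn (diagAffine b1 b2 c1 c2 ⁻¹' S) (v ∘ diagAffine b1 b2 c1 c2) ≤
      max |b1| |b2| / Real.sqrt |b1 * b2| * sn S v := by
  have hm : 0 < min |b1| |b2| := lt_min (abs_pos.2 hb1) (abs_pos.2 hb2)
  rw [sn_comp_diagAffine hb1 hb2, sn, ← sqrt_inv_mul_sq_mul (abs_nonneg _) (by positivity)]
  gcongr
  exact integral_le_mul_integral_of_le_mul (measurable_gradSq v).aestronglyMeasurable
    (gradSq_nonneg v) (weightedGradSq_nonneg b1 b2 v) (weightedGradSq_le_sq_max_abs_mul b1 b2 v)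
    (fun y => (le_inv_mul_iff₀ (by positivity)).2 (sq_min_abs_mul_gradSq_le b1 b2 v y))

theorem le_sn_comp_diagAffine (hb1 : b1 ≠ 0) (hb2 : b2 ≠ 0) (c1 c2 : ℝ)
    (S : Set (ℝ × ℝ)) (v : ℝ × ℝ → ℝ) :
    min |b1| |b2| / Real.sqrt |b1 * b2| * sn S v ≤
      sn (diagAffine b1 b2 c1 c2 ⁻¹' S) (v ∘ diagAffine b1 b2 c1 c2) := by
  have hm : 0 < min |b1| |b2| := lt_min (abs_pos.2 hb1) (abs_pos.2 hb2)
  have hint : ∫ y in S, gradSq v y ≤ (min |b1| |b2| ^ 2)⁻¹ * ∫ y in S, weightedGradSq b1 b2 v y :=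
    integral_le_mul_integral_of_le_mul (measurable_weightedGradSq b1 b2 v).aestronglyMeasurable
      (weightedGradSq_nonneg b1 b2 v) (gradSq_nonneg v)
      (fun y => (le_inv_mul_iff₀ (by positivity)).2 (sq_min_abs_mul_gradSq_le b1 b2 v y))
      (weightedGradSq_le_sq_max_abs_mul b1 b2 v)
  rw [sn_comp_diagAffine hb1 hb2, sn, ← sqrt_inv_mul_sq_mul (abs_nonneg _) hm.le]
  gcongr
  rwa [← le_inv_mul_iff₀ (by positivity)]

theorem sn_comp_diagAffine_eq_zero_iff (hb1 : b1 ≠ 0) (hb2 : b2 ≠ 0) (c1 c2 : ℝ)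
    (S : Set (ℝ × ℝ)) (v : ℝ × ℝ → ℝ) :
    sn (diagAffine b1 b2 c1 c2 ⁻¹' S) (v ∘ diagAffine b1 b2 c1 c2) = 0 ↔ sn S v = 0 := by
  have hm : 0 < min |b1| |b2| / Real.sqrt |b1 * b2| := by
    have := lt_min (abs_pos.2 hb1) (abs_pos.2 hb2); positivity
  constructor
  · intro h
    have := le_sn_comp_diagAffine hb1 hb2 c1 c2 S v
    rw [h] at this
    exact le_antisymm (nonpos_of_mul_nonpos_right this hm) (sn_nonneg S v)
  · intro h
    have := sn_comp_diagAffine_le hb1 hb2 c1 c2 S v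
    rw [h, mul_zero] at this
    exact le_antisymm this (sn_nonneg _ _)

theorem dualQuotient_comp_diagAffine (hb1 : b1 ≠ 0) (hb2 : b2 ≠ 0) (c1 c2 : ℝ)
    (S : Set (ℝ × ℝ)) (φ v : ℝ × ℝ → ℝ) :
    dualQuotient (diagAffine b1 b2 c1 c2 ⁻¹' S) (φ ∘ diagAffine b1 b2 c1 c2)
        (v ∘ diagAffine b1 b2 c1 c2) =
      |b1 * b2|⁻¹ * |∫ y in S, φ y * v y| /
        sn (diagAffine b1 b2 c1 c2 ⁻¹' S) (v ∘ diagAffine b1 b2 c1 c2) := by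
  rw [dualQuotient]
  simp only [Function.comp_apply]
  rw [setIntegral_comp_diagAffine hb1 hb2 c1 c2 (fun y => φ y * v y), smul_eq_mul, abs_mul,
    abs_inv, abs_abs]

theorem dualQuotient_comp_diagAffine_le (hb1 : b1 ≠ 0) (hb2 : b2 ≠ 0) (c1 c2 : ℝ)
    (S : Set (ℝ × ℝ)) (φ v : ℝ × ℝ → ℝ) :
    dualQuotient (diagAffine b1 b2 c1 c2 ⁻¹' S) (φ ∘ diagAffine b1 b2 c1 c2)
        (v ∘ diagAffine b1 b2 c1 c2) ≤
      (Real.sqrt |b1 * b2| * min |b1| |b2|)⁻¹ * dualQuotient S φ v := by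
  rw [dualQuotient_comp_diagAffine hb1 hb2, dualQuotient]
  rcases (sn_nonneg S v).eq_or_lt with hs | hs
  · rw [(sn_comp_diagAffine_eq_zero_iff hb1 hb2 c1 c2 S v).2 hs.symm, ← hs, div_zero, div_zero,
      mul_zero]
  have hm : 0 < min |b1| |b2| := lt_min (abs_pos.2 hb1) (abs_pos.2 hb2)
  have hd : 0 < |b1 * b2| := by positivity
  calc |b1 * b2|⁻¹ * |∫ y in S, φ y * v y| /
        sn (diagAffine b1 b2 c1 c2 ⁻¹' S) (v ∘ diagAffine b1 b2 c1 c2)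
      ≤ |b1 * b2|⁻¹ * |∫ y in S, φ y * v y| / (min |b1| |b2| / Real.sqrt |b1 * b2| * sn S v) :=
        div_le_div_of_nonneg_left (by positivity) (by positivity)
          (le_sn_comp_diagAffine hb1 hb2 c1 c2 S v)
    _ = (Real.sqrt |b1 * b2| * min |b1| |b2|)⁻¹ * (|∫ y in S, φ y * v y| / sn S v) := by
        field_simp
        rw [Real.sq_sqrt hd.le]
        ring

theorem dualQuotient_le_dualQuotient_comp_diagAffine (hb1 : b1 ≠ 0) (hb2 : b2 ≠ 0)
    (c1 c2 : ℝ) (S : Set (ℝ × ℝ)) (φ v : ℝ × ℝ → ℝ) :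
    dualQuotient S φ v ≤ Real.sqrt |b1 * b2| * max |b1| |b2| *
      dualQuotient (diagAffine b1 b2 c1 c2 ⁻¹' S) (φ ∘ diagAffine b1 b2 c1 c2)
        (v ∘ diagAffine b1 b2 c1 c2) := by
  rw [dualQuotient_comp_diagAffine hb1 hb2, dualQuotient]
  rcases (sn_nonneg _ _).eq_or_lt with hs' | hs'
  · rw [(sn_comp_diagAffine_eq_zero_iff hb1 hb2 c1 c2 S v).1 hs'.symm, ← hs', div_zero, div_zero,
      mul_zero]
  have hm : 0 < min |b1| |b2| := lt_min (abs_pos.2 hb1) (abs_pos.2 hb2)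
  have hd : 0 < |b1 * b2| := by positivity
  have hs : 0 < sn S v :=
    pos_of_mul_pos_right (hs'.trans_le (sn_comp_diagAffine_le hb1 hb2 c1 c2 S v)) (by positivity)
  calc |∫ y in S, φ y * v y| / sn S v
      = Real.sqrt |b1 * b2| * max |b1| |b2| * (|b1 * b2|⁻¹ * |∫ y in S, φ y * v y| /
          (max |b1| |b2| / Real.sqrt |b1 * b2| * sn S v)) := by
        field_simp
        rw [Real.sq_sqrt hd.le]
    _ ≤ _ := by
        gcongr
        exact sn_comp_diagAffine_le hb1 hb2 c1 c2 S v

theorem dualNorm_comp_diagAffine_le {ι : Type*} (hb1 : b1 ≠ 0) (hb2 : b2 ≠ 0) (c1 c2 : ℝ)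
    (S : Set (ℝ × ℝ)) (φ : ℝ × ℝ → ℝ) (u : ι → ℝ × ℝ → ℝ) :
    dualNorm (diagAffine b1 b2 c1 c2 ⁻¹' S) (φ ∘ diagAffine b1 b2 c1 c2)
        (fun i => u i ∘ diagAffine b1 b2 c1 c2) ≤
      (Real.sqrt |b1 * b2| * min |b1| |b2|)⁻¹ * dualNorm S φ u := by
  refine iSup_le_mul_iSup_of_forall_exists_le (K := Real.sqrt |b1 * b2| * max |b1| |b2|)
    (by positivity) (by positivity)
    (fun _ => dualQuotient_nonneg _ _ _) (fun i => ?_) (fun j => ?_)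
  · exact ⟨⟨i, (sn_comp_diagAffine_eq_zero_iff hb1 hb2 c1 c2 S (u i)).not.1 i.2⟩,
      dualQuotient_comp_diagAffine_le hb1 hb2 c1 c2 S φ (u i)⟩
  · exact ⟨⟨j, (sn_comp_diagAffine_eq_zero_iff hb1 hb2 c1 c2 S (u j)).not.2 j.2⟩,
      dualQuotient_le_dualQuotient_comp_diagAffine hb1 hb2 c1 c2 S φ (u j)⟩

theorem dualNorm_le_dualNorm_comp_diagAffine {ι : Type*} (hb1 : b1 ≠ 0) (hb2 : b2 ≠ 0)
    (c1 c2 : ℝ) (S : Set (ℝ × ℝ)) (φ : ℝ × ℝ → ℝ) (u : ι → ℝ × ℝ → ℝ) :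
    dualNorm S φ u ≤ Real.sqrt |b1 * b2| * max |b1| |b2| *
      dualNorm (diagAffine b1 b2 c1 c2 ⁻¹' S) (φ ∘ diagAffine b1 b2 c1 c2)
        (fun i => u i ∘ diagAffine b1 b2 c1 c2) := by
  refine iSup_le_mul_iSup_of_forall_exists_le (K := (Real.sqrt |b1 * b2| * min |b1| |b2|)⁻¹)
    (by positivity) (by positivity)
    (fun _ => dualQuotient_nonneg _ _ _) (fun j => ?_) (fun i => ?_)
  · exact ⟨⟨j, (sn_comp_diagAffine_eq_zero_iff hb1 hb2 c1 c2 S (u j)).not.2 j.2⟩,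
      dualQuotient_le_dualQuotient_comp_diagAffine hb1 hb2 c1 c2 S φ (u j)⟩
  · exact ⟨⟨i, (sn_comp_diagAffine_eq_zero_iff hb1 hb2 c1 c2 S (u i)).not.1 i.2⟩,
      dualQuotient_comp_diagAffine_le hb1 hb2 c1 c2 S φ (u i)⟩

end DiagonalAffine

theorem saturation_pullback_general (b1 b2 c1 c2 : ℝ) (hb1 : b1 ≠ 0) (hb2 : b2 ≠ 0)
    (T : Set (ℝ × ℝ))
    (hT : T = (fun p : ℝ × ℝ => (b1 * p.1 + c1, b2 * p.2 + c2)) ⁻¹'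
        (Icc (-1 : ℝ) 1 ×ˢ Icc (-1 : ℝ) 1))
    (Hh Vh : Submodule ℝ ((ℝ × ℝ) → ℝ))
    (φh : ℝ × ℝ → ℝ) :
    (⨆ v : {v : Hh // sn T (fun x => (v : (ℝ × ℝ) → ℝ) (b1 * x.1 + c1, b2 * x.2 + c2)) ≠ 0},
        |∫ x in T, φh (b1 * x.1 + c1, b2 * x.2 + c2) *
            ((v : Hh) : (ℝ × ℝ) → ℝ) (b1 * x.1 + c1, b2 * x.2 + c2)| /
          sn T (fun x => ((v : Hh) : (ℝ × ℝ) → ℝ) (b1 * x.1 + c1, b2 * x.2 + c2))) /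
    (⨆ v : {v : Vh // sn T (fun x => (v : (ℝ × ℝ) → ℝ) (b1 * x.1 + c1, b2 * x.2 + c2)) ≠ 0},
        |∫ x in T, φh (b1 * x.1 + c1, b2 * x.2 + c2) *
            ((v : Vh) : (ℝ × ℝ) → ℝ) (b1 * x.1 + c1, b2 * x.2 + c2)| /
          sn T (fun x => ((v : Vh) : (ℝ × ℝ) → ℝ) (b1 * x.1 + c1, b2 * x.2 + c2))) ≤
    (max |b1| |b2| / min |b1| |b2|) ^ 2 *
      ((⨆ v : {v : Hh // sn (Icc (-1 : ℝ) 1 ×ˢ Icc (-1 : ℝ) 1) (v : (ℝ × ℝ) → ℝ) ≠ 0},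
          |∫ x in Icc (-1 : ℝ) 1 ×ˢ Icc (-1 : ℝ) 1, φh x * ((v : Hh) : (ℝ × ℝ) → ℝ) x| /
            sn (Icc (-1 : ℝ) 1 ×ˢ Icc (-1 : ℝ) 1) ((v : Hh) : (ℝ × ℝ) → ℝ)) /
        (⨆ v : {v : Vh // sn (Icc (-1 : ℝ) 1 ×ˢ Icc (-1 : ℝ) 1) (v : (ℝ × ℝ) → ℝ) ≠ 0},
          |∫ x in Icc (-1 : ℝ) 1 ×ˢ Icc (-1 : ℝ) 1, φh x * ((v : Vh) : (ℝ × ℝ) → ℝ) x| /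
            sn (Icc (-1 : ℝ) 1 ×ˢ Icc (-1 : ℝ) 1) ((v : Vh) : (ℝ × ℝ) → ℝ))) := by
  subst hT
  set Sq : Set (ℝ × ℝ) := Icc (-1 : ℝ) 1 ×ˢ Icc (-1 : ℝ) 1
  have hm : 0 < min |b1| |b2| := lt_min (abs_pos.2 hb1) (abs_pos.2 hb2)
  have hκ : 1 ≤ max |b1| |b2| / min |b1| |b2| := (one_le_div hm).2 min_le_max
  have hratio := div_le_mul_mul_div_of_le_mul (dualNorm_nonneg Sq φh ((↑) : Hh → ℝ × ℝ → ℝ))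
    (dualNorm_nonneg Sq φh ((↑) : Vh → ℝ × ℝ → ℝ)) (dualNorm_nonneg _ _ _)
    (dualNorm_comp_diagAffine_le hb1 hb2 c1 c2 Sq φh ((↑) : Hh → ℝ × ℝ → ℝ))
    (dualNorm_comp_diagAffine_le hb1 hb2 c1 c2 Sq φh ((↑) : Vh → ℝ × ℝ → ℝ))
    (dualNorm_le_dualNorm_comp_diagAffine hb1 hb2 c1 c2 Sq φh ((↑) : Vh → ℝ × ℝ → ℝ))
  -- the suprema in the goal are these `dualNorm`s, once `diagAffine` and `∘` are unfolded
  refine hratio.trans ?_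
  have hcK : (Real.sqrt |b1 * b2| * min |b1| |b2|)⁻¹ * (Real.sqrt |b1 * b2| * max |b1| |b2|) =
      max |b1| |b2| / min |b1| |b2| := by
    have : 0 < Real.sqrt |b1 * b2| := by positivity
    field_simp
  rw [hcK]
  exact mul_le_mul_of_nonneg_right (le_self_pow₀ hκ two_ne_zero)
    (div_nonneg (dualNorm_nonneg _ _ _) (dualNorm_nonneg _ _ _))

/-- Saturation extends from the reference square to rectangles: let `F(x) = Bx + b` with
`B = diag(b₁,b₂)` invertible map the rectangle `T` onto `T̂ = [−1,1]²`, let `V̂ ⊆ Ĥ` be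
subspaces of `H¹(T̂)` (with `V̂` finite dimensional and the `H¹(T̂)`-seminorm a norm on `Ĥ`),
and let `φ̂ ∈ L²(T̂)`.  With `Ĝ(v̂) := ∫_{T̂} φ̂ v̂` and the pulled-back functional
`G(v̂∘F) := ∫_T (φ̂∘F)(v̂∘F)`, the dual-norm ratio over the pullback spaces is bounded by
`κ₂(B)²` times the ratio over `Ĥ, V̂`, where `κ₂(B) = max(|b₁|,|b₂|)/min(|b₁|,|b₂|)`. -/
theorem saturation_pullback (b1 b2 c1 c2 : ℝ) (hb1 : b1 ≠ 0) (hb2 : b2 ≠ 0)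
    (T : Set (ℝ × ℝ))
    (hT : T = (fun p : ℝ × ℝ => (b1 * p.1 + c1, b2 * p.2 + c2)) ⁻¹'
        (Icc (-1 : ℝ) 1 ×ˢ Icc (-1 : ℝ) 1))
    (Hh Vh : Submodule ℝ ((ℝ × ℝ) → ℝ)) (hVH : Vh ≤ Hh) [FiniteDimensional ℝ Vh]
    (hdiff : ∀ v ∈ Hh, Differentiable ℝ v)
    (hnorm : ∀ v ∈ Hh, sn (Icc (-1 : ℝ) 1 ×ˢ Icc (-1 : ℝ) 1) v = 0 → v = 0)
    (φh : ℝ × ℝ → ℝ) (hφ : MemLp φh 2 (volume.restrict (Icc (-1 : ℝ) 1 ×ˢ Icc (-1 : ℝ) 1))) :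
    (⨆ v : {v : Hh // sn T (fun x => (v : (ℝ × ℝ) → ℝ) (b1 * x.1 + c1, b2 * x.2 + c2)) ≠ 0},
        |∫ x in T, φh (b1 * x.1 + c1, b2 * x.2 + c2) *
            ((v : Hh) : (ℝ × ℝ) → ℝ) (b1 * x.1 + c1, b2 * x.2 + c2)| /
          sn T (fun x => ((v : Hh) : (ℝ × ℝ) → ℝ) (b1 * x.1 + c1, b2 * x.2 + c2))) /
    (⨆ v : {v : Vh // sn T (fun x => (v : (ℝ × ℝ) → ℝ) (b1 * x.1 + c1, b2 * x.2 + c2)) ≠ 0},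
        |∫ x in T, φh (b1 * x.1 + c1, b2 * x.2 + c2) *
            ((v : Vh) : (ℝ × ℝ) → ℝ) (b1 * x.1 + c1, b2 * x.2 + c2)| /
          sn T (fun x => ((v : Vh) : (ℝ × ℝ) → ℝ) (b1 * x.1 + c1, b2 * x.2 + c2))) ≤
    (max |b1| |b2| / min |b1| |b2|) ^ 2 *
      ((⨆ v : {v : Hh // sn (Icc (-1 : ℝ) 1 ×ˢ Icc (-1 : ℝ) 1) (v : (ℝ × ℝ) → ℝ) ≠ 0},
          |∫ x in Icc (-1 : ℝ) 1 ×ˢ Icc (-1 : ℝ) 1, φh x * ((v : Hh) : (ℝ × ℝ) → ℝ) x| /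
            sn (Icc (-1 : ℝ) 1 ×ˢ Icc (-1 : ℝ) 1) ((v : Hh) : (ℝ × ℝ) → ℝ)) /
        (⨆ v : {v : Vh // sn (Icc (-1 : ℝ) 1 ×ˢ Icc (-1 : ℝ) 1) (v : (ℝ × ℝ) → ℝ) ≠ 0},
          |∫ x in Icc (-1 : ℝ) 1 ×ˢ Icc (-1 : ℝ) 1, φh x * ((v : Vh) : (ℝ × ℝ) → ℝ) x| /
            sn (Icc (-1 : ℝ) 1 ×ˢ Icc (-1 : ℝ) 1) ((v : Vh) : (ℝ × ℝ) → ℝ))) :=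
  saturation_pullback_general b1 b2 c1 c2 hb1 hb2 T hT Hh Vh φh
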